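/- Let θ be irrational and N ≥ 2, with π the sorting permutation of the first N Kronecker sequence terms, p = π(1), q = π(N-1). If N = p + q, then the N-th Kronecker sequence graph is isomorphic to the circulant graph C_N({1, p}), i.e. the graph on Z/NZ where v is adjacent to w iff v - w ≡ ±1 or ±p (mod N). -/

import Mathlib

/-- The `N`-th sequence graph for a sequence sorted by the permutation `π`:
vertices are `{0, …, N-1}`, and edges form the two Hamiltonian cycles
`(i, i+1)` (indices mod `N`) and `(i, S(i))` where `S(i) = π(π⁻¹(i) + 1 mod N)`. -/
def seqGraph (N : ℕ) [NeZero N] (π : Equiv.Perm (Fin N)) : SimpleGraph (Fin N) :=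
  SimpleGraph.fromRel fun i j => j = i + 1 ∨ j = π (π.symm i + 1)

/-- The circulant graph on `ZMod N` with connection set `{±c₁, ±c₂}`. -/
def circulantTwo (N : ℕ) (c₁ c₂ : ℕ) : SimpleGraph (ZMod N) :=
  SimpleGraph.fromRel fun v w => w - v = (c₁ : ZMod N) ∨ w - v = (c₂ : ZMod N)

private lemma fract_add_fract (u v : ℝ) :
    Int.fract (Int.fract u + Int.fract v) = Int.fract (u + v) := by
  have h : Int.fract u + Int.fract v = (u + v) + ((-⌊u⌋ - ⌊v⌋ : ℤ) : ℝ) := by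
    simp only [Int.fract]; push_cast; ring
  rw [h, Int.fract_add_intCast]

private lemma fract_sub_fract (u v : ℝ) :
    Int.fract (Int.fract u - Int.fract v) = Int.fract (u - v) := by
  have h : Int.fract u - Int.fract v = (u - v) + ((⌊v⌋ - ⌊u⌋ : ℤ) : ℝ) := by
    simp only [Int.fract]; push_cast; ring
  rw [h, Int.fract_add_intCast]

private lemma strictMono_fixed {n : ℕ} (f : Fin n → Fin n) (hf : StrictMono f) :
    ∀ k, f k = k := by
  have hsurj : Function.Surjective f := Finite.injective_iff_surjective.mp hf.injective
  intro k
  refine le_antisymm ?_ (@StrictMono.le_apply (Fin n) _ Finite.to_wellFoundedLT f hf k)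
  have h3 : k ≤ (StrictMono.orderIsoOfSurjective f hf hsurj).symm k :=
    @StrictMono.le_apply (Fin n) _ Finite.to_wellFoundedLT _
      ((StrictMono.orderIsoOfSurjective f hf hsurj).symm.strictMono) k
  have h4 := hf.monotone h3
  have h5 : f ((StrictMono.orderIsoOfSurjective f hf hsurj).symm k) = k := by
    have hcoe := StrictMono.coe_orderIsoOfSurjective f hf hsurj
    have h6 := (StrictMono.orderIsoOfSurjective f hf hsurj).apply_symm_apply k
    rwa [hcoe] at h6
  rwa [h5] at h4

set_option maxHeartbeats 1000000 in
/-- For irrational `θ`, with `π` the sorting permutation of the first `N`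
Kronecker terms, `p = π(1)` and `q = π(N-1)`: if `N = p + q`, then the `N`-th
Kronecker sequence graph is isomorphic to the circulant graph `C_N({1, p})`. -/
theorem kronecker_seqGraph_iso_circulant (θ : ℝ) (hθ : Irrational θ)
    (N : ℕ) [NeZero N] (hN : 2 ≤ N) (π : Equiv.Perm (Fin N))
    (hsort : ∀ i j : Fin N, i < j →
      Int.fract ((π i : ℕ) * θ) < Int.fract ((π j : ℕ) * θ))
    (p q : ℕ) (hp : p = (π 1 : ℕ)) (hq : q = (π ⟨N - 1, by omega⟩ : ℕ))
    (hpq : N = p + q) :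
    Nonempty (seqGraph N π ≃g circulantTwo N 1 p) := by
  set F : ℕ → ℝ := fun n => Int.fract (n * θ) with hF
  -- distinct values
  have Fdist : ∀ m n : ℕ, m ≠ n → F m ≠ F n := by
    intro m n hmn h
    simp only [hF, Int.fract] at h
    have h2 : ((m - n : ℤ) : ℝ) * θ = ((⌊(m : ℝ) * θ⌋ - ⌊(n : ℝ) * θ⌋ : ℤ) : ℝ) := by
      push_cast; linarith
    have hmn' : (m : ℤ) - (n : ℤ) ≠ 0 := sub_ne_zero.mpr (by exact_mod_cast hmn)
    have h3 : Irrational (((m : ℤ) - (n : ℤ) : ℤ) * θ) := hθ.intCast_mul hmn'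
    rw [h2] at h3
    exact Int.not_irrational _ h3
  have Fnonneg : ∀ n : ℕ, 0 ≤ F n := fun n => Int.fract_nonneg _
  have Flt1 : ∀ n : ℕ, F n < 1 := fun n => Int.fract_lt_one _
  have F0 : F 0 = 0 := by simp [hF]
  have Fpos : ∀ n : ℕ, n ≠ 0 → 0 < F n := fun n hn =>
    lt_of_le_of_ne (Fnonneg n) (fun h => Fdist 0 n (Ne.symm hn) (by rw [F0, ← h]))
  have hmono : StrictMono (fun i : Fin N => F (π i).val) := fun i j hij => hsort i j hij
  -- π 0 = 0
  have hπ0 : π 0 = 0 := by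
    by_contra h
    have h1 : π.symm 0 ≠ 0 := by
      intro hs
      have h1' := π.apply_symm_apply 0
      rw [hs] at h1'
      exact h h1'
    have h2 : (0 : Fin N) < π.symm 0 := by
      rw [Fin.lt_def]
      have := Fin.val_ne_of_ne h1
      simp only [Fin.val_zero] at *
      omega
    have h3 := hmono h2
    simp only [Equiv.apply_symm_apply, Fin.val_zero, F0] at h3
    exact absurd h3 (not_lt.mpr (Fnonneg _))
  have hpltN : p < N := hp ▸ (π 1).isLt
  have hqltN : q < N := hq ▸ (π ⟨N - 1, by omega⟩).isLt
  have hp0 : p ≠ 0 := by omega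
  have hq0 : q ≠ 0 := by omega
  -- min and max
  have Fmin : ∀ n : ℕ, n ≠ 0 → n < N → F p ≤ F n := by
    intro n hn0 hnN
    have h1 : (1 : Fin N) ≤ π.symm ⟨n, hnN⟩ := by
      have h2 : π.symm ⟨n, hnN⟩ ≠ 0 := by
        intro hs
        have : π 0 = ⟨n, hnN⟩ := by rw [← hs, Equiv.apply_symm_apply]
        rw [hπ0] at this
        exact hn0 (by simpa using (congrArg Fin.val this).symm)
      rw [Fin.le_def, Fin.val_one', Nat.mod_eq_of_lt (by omega)]
      have h3 := Fin.val_ne_of_ne h2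
      simp only [Fin.val_zero] at h3
      omega
    have h4 := hmono.monotone h1
    simp only [Equiv.apply_symm_apply] at h4
    simpa [← hp] using h4
  have Fmax : ∀ n : ℕ, n < N → F n ≤ F q := by
    intro n hnN
    have h1 : π.symm ⟨n, hnN⟩ ≤ ⟨N - 1, by omega⟩ := by
      rw [Fin.le_def]
      have h2 := (π.symm ⟨n, hnN⟩).isLt
      have h2b : ((⟨N - 1, by omega⟩ : Fin N)).val = N - 1 := rfl
      omega
    have h4 := hmono.monotone h1
    simp only [Equiv.apply_symm_apply] at h4
    simpa [← hq] using h4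
  -- ZMod facts
  have hval_p : ((p : ZMod N)).val = p := ZMod.val_cast_of_lt hpltN
  have hval_q : ((q : ZMod N)).val = q := ZMod.val_cast_of_lt hqltN
  have hcastval : ∀ z : ZMod N, ((z.val : ℕ) : ZMod N) = z := fun z => by
    rw [ZMod.natCast_val, ZMod.cast_id]
  have hqneg : (q : ZMod N) = -(p : ZMod N) := by
    have h1 : ((p + q : ℕ) : ZMod N) = 0 := by rw [← hpq]; exact ZMod.natCast_self N
    push_cast at h1
    linear_combination h1
  -- the key step lemma
  have step : ∀ z : ZMod N, z ≠ (q : ZMod N) → F z.val < F (z + (p : ZMod N)).val := by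
    intro z hz
    have hb : (z + (p : ZMod N)).val = (z.val + p) % N := by rw [ZMod.val_add, hval_p]
    by_cases hcase : z.val + p < N
    · have hb' : (z + (p : ZMod N)).val = z.val + p := by rw [hb, Nat.mod_eq_of_lt hcase]
      rw [hb']
      have key : F (z.val + p) = Int.fract (F z.val + F p) := by
        simp only [hF]
        rw [fract_add_fract]
        congr 1
        push_cast
        ring
      by_cases hs : F z.val + F p < 1
      · rw [key, Int.fract_eq_self.mpr ⟨add_nonneg (Fnonneg _) (Fnonneg _), hs⟩]
        linarith [Fpos p hp0]
      · exfalso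
        push_neg at hs
        have h5 : Int.fract (F z.val + F p - 1) = F z.val + F p - 1 :=
          Int.fract_eq_self.mpr ⟨by linarith, by linarith [Flt1 z.val, Flt1 p]⟩
        have h6 : Int.fract (F z.val + F p) = Int.fract (F z.val + F p - 1) := by
          rw [show F z.val + F p - 1 = F z.val + F p - ((1 : ℤ) : ℝ) by norm_num,
            Int.fract_sub_intCast]
        have heq : F (z.val + p) = F z.val + F p - 1 := by rw [key, h6, h5]
        have h2 : F p ≤ F (z.val + p) := Fmin _ (by omega) hcase
        have h3 : F p ≠ F (z.val + p) := by
          apply Fdist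
          have hzv0 : z.val ≠ 0 := by
            intro h0
            rw [h0, F0] at hs
            linarith [Flt1 p]
          omega
        linarith [Flt1 z.val, lt_of_le_of_ne h2 h3]
    · push_neg at hcase
      have hvlt := z.val_lt
      have hge : q ≤ z.val := by omega
      have hb' : (z + (p : ZMod N)).val = z.val - q := by
        rw [hb, Nat.mod_eq_sub_mod hcase, Nat.mod_eq_of_lt (by omega)]
        omega
      rw [hb']
      have hzq : z.val ≠ q := by
        intro h
        exact hz (by rw [← hcastval z, h])
      have hlt : F z.val < F q := lt_of_le_of_ne (Fmax _ hvlt) (Fdist _ _ hzq)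
      have key : F (z.val - q) = Int.fract (F z.val - F q) := by
        simp only [hF]
        rw [fract_sub_fract]
        congr 1
        rw [Nat.cast_sub hge]
        ring
      have h5 : Int.fract (F z.val - F q + 1) = F z.val - F q + 1 :=
        Int.fract_eq_self.mpr ⟨by linarith [Flt1 q, Fnonneg z.val], by linarith⟩
      have h6 : Int.fract (F z.val - F q) = Int.fract (F z.val - F q + 1) := by
        rw [show F z.val - F q + 1 = F z.val - F q + ((1 : ℤ) : ℝ) by norm_num,
          Int.fract_add_intCast]
      have h4 : Int.fract (F z.val - F q) = F z.val - F q + 1 := by rw [h6, h5]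
      rw [key, h4]
      linarith [Flt1 q]
  -- iterated chain
  have chain : ∀ (n : ℕ) (w : ZMod N), 0 < n →
      (∀ k, k < n → w + (k : ZMod N) * p ≠ (q : ZMod N)) →
      F w.val < F ((w + (n : ZMod N) * (p : ZMod N)).val) := by
    intro n
    induction n with
    | zero => intro w h; omega
    | succ n ih =>
      intro w _ hk
      rcases Nat.eq_zero_or_pos n with h0 | hpos
      · subst h0
        have h1 := step w (by simpa using hk 0 (by omega))
        simpa using h1
      · have h1 : F w.val < F ((w + (n : ZMod N) * p).val) :=
          ih w hpos (fun k hkn => hk k (by omega))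
        have h2 := step (w + (n : ZMod N) * p) (hk n (by omega))
        have h3 : w + (n : ZMod N) * p + (p : ZMod N) = w + ((n + 1 : ℕ) : ZMod N) * p := by
          push_cast; ring
        rw [h3] at h2
        exact h1.trans h2
  -- coprimality
  have hco : Nat.Coprime p N := by
    by_contra hgcd
    have hg0 : Nat.gcd p N ≠ 0 := fun h => hp0 (Nat.eq_zero_of_gcd_eq_zero_left h)
    have hkq : ∀ k, k < N → (1 : ZMod N) + (k : ZMod N) * p ≠ (q : ZMod N) := by
      intro k _ heq
      rw [hqneg] at heq
      have h0 : ((1 + (k + 1) * p : ℕ) : ZMod N) = 0 := by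
        push_cast
        linear_combination heq
      rw [ZMod.natCast_eq_zero_iff] at h0
      have hd1 : Nat.gcd p N ∣ 1 + (k + 1) * p := (Nat.gcd_dvd_right p N).trans h0
      have hd2 : Nat.gcd p N ∣ (k + 1) * p := Dvd.dvd.mul_left (Nat.gcd_dvd_left p N) _
      have hd3 : Nat.gcd p N ∣ 1 := (Nat.dvd_add_right hd2).mp (by rwa [add_comm] at hd1)
      exact hgcd (Nat.dvd_one.mp hd3)
    have h1 := chain N 1 (by omega) (fun k hk => hkq k hk)
    rw [ZMod.natCast_self, zero_mul, add_zero] at h1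
    exact lt_irrefl _ h1
  have hunit : IsUnit (p : ZMod N) := (ZMod.isUnit_iff_coprime p N).mpr hco
  have hkq' : ∀ k : ℕ, k < N - 1 → (k : ZMod N) * p ≠ (q : ZMod N) := by
    intro k hk heq
    rw [hqneg] at heq
    have h0 : ((k + 1 : ℕ) : ZMod N) * p = 0 := by push_cast; linear_combination heq
    have h1 : ((k + 1 : ℕ) : ZMod N) = 0 := (hunit.mul_left_eq_zero).mp h0
    rw [ZMod.natCast_eq_zero_iff] at h1
    have := Nat.le_of_dvd (by omega) h1
    omega
  -- the multiplication map sorts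
  have hτmono : ∀ a b : Fin N, a < b →
      F (((a.val : ZMod N) * p).val) < F (((b.val : ZMod N) * p).val) := by
    intro a b hab
    rw [Fin.lt_def] at hab
    have hbile := b.isLt
    have h1 := chain (b.val - a.val) ((a.val : ZMod N) * p) (by omega) ?_
    · have h2 : (a.val : ZMod N) * p + ((b.val - a.val : ℕ) : ZMod N) * p
          = (b.val : ZMod N) * p := by
        rw [Nat.cast_sub (le_of_lt hab)]
        ring
      rwa [h2] at h1
    · intro k hkn heq
      have h3 : (a.val : ZMod N) * p + (k : ZMod N) * p = ((a.val + k : ℕ) : ZMod N) * p := by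
        push_cast; ring
      rw [h3] at heq
      exact hkq' (a.val + k) (by omega) heq
  -- identify π
  have hπτ : ∀ k : Fin N, π k = ⟨((k.val : ZMod N) * p).val, ZMod.val_lt _⟩ := by
    have hν : StrictMono
        (fun k : Fin N => π.symm ⟨((k.val : ZMod N) * p).val, ZMod.val_lt _⟩) := by
      intro a b hab
      have h1 : F ((⟨((a.val : ZMod N) * p).val, ZMod.val_lt _⟩ : Fin N)).val
          < F ((⟨((b.val : ZMod N) * p).val, ZMod.val_lt _⟩ : Fin N)).val := hτmono a b hab
      exact hmono.lt_iff_lt.mp (by simpa only [Equiv.apply_symm_apply] using h1)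
    have hfix := strictMono_fixed _ hν
    intro k
    have h2 := hfix k
    have h3 := congrArg π h2
    rw [Equiv.apply_symm_apply] at h3
    exact h3.symm
  -- the equivalence
  set e : Fin N ≃ ZMod N :=
    { toFun := fun i => (i.val : ZMod N)
      invFun := fun z => ⟨z.val, z.val_lt⟩
      left_inv := fun i => Fin.ext (ZMod.val_cast_of_lt i.isLt)
      right_inv := fun z => hcastval z } with hedef
  have he : ∀ i : Fin N, e i = (i.val : ZMod N) := fun _ => rfl
  have heπ : ∀ k : Fin N, e (π k) = e k * p := by
    intro k
    rw [hπτ k, he, he]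
    exact hcastval _
  have headd : ∀ i j : Fin N, e (i + j) = e i + e j := by
    intro i j
    rw [he, he, he, Fin.val_add, ZMod.natCast_mod]
    push_cast
    rfl
  have he1 : e (1 : Fin N) = 1 := by
    rw [he, Fin.val_one', Nat.mod_eq_of_lt (by omega), Nat.cast_one]
  have hsucc : ∀ i : Fin N, e (π (π.symm i + 1)) = e i + (p : ZMod N) := by
    intro i
    rw [heπ, headd, he1, add_mul, one_mul, ← heπ, Equiv.apply_symm_apply]
  have A1 : ∀ a b : Fin N, (b = a + 1) ↔ (e b - e a = ((1 : ℕ) : ZMod N)) := by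
    intro a b
    rw [Nat.cast_one]
    constructor
    · rintro rfl
      rw [headd, he1]; ring
    · intro h
      apply e.injective
      rw [headd, he1]
      linear_combination h
  have A2 : ∀ a b : Fin N, (b = π (π.symm a + 1)) ↔ (e b - e a = (p : ZMod N)) := by
    intro a b
    constructor
    · rintro rfl
      rw [hsucc]; ring
    · intro h
      apply e.injective
      rw [hsucc]
      linear_combination h
  refine ⟨⟨e, ?_⟩⟩
  intro i j
  simp only [seqGraph, circulantTwo, SimpleGraph.fromRel_adj]
  rw [← A1 i j, ← A2 i j, ← A1 j i, ← A2 j i]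
  have : e i ≠ e j ↔ i ≠ j := e.injective.ne_iff
  tauto
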